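/- arXiv:1708.04303 — 3 statements merged into one kernel-verified Lean document; each statement's English description precedes it below -/
import Mathlib

section
/- Let C = ∫ ∇f(x) ∇f(x)ᵀ ρ(x) dx where ρ is a probability density that is positive on an open connected set Ω ⊆ ℝᵐ and zero elsewhere, and f is C¹. If C u = 0 for some u ∈ ℝᵐ, then the directional derivative uᵀ∇f(x) vanishes for all x ∈ Ω; consequently f is constant along u within Ω. -/
/-!
Expanding the square, `∫ (uᵀ∇f)² ρ = uᵀ C u = 0`. The integrand is nonnegative, so it vanishes
almost everywhere; since `uᵀ∇f` is continuous and `ρ > 0` on the open set `Ω`, the open set of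
points of `Ω` where `uᵀ∇f ≠ 0` is null, hence empty. Along a segment in direction `u` inside `Ω`
the derivative of `s ↦ f (x + s • u)` is then zero, so `f` is constant there by the mean value
theorem.
-/

open Matrix MeasureTheory Set

theorem eqOn_zero_of_integral_mul_eq_zero {X : Type*} [TopologicalSpace X] [MeasurableSpace X]
    {μ : Measure X} [μ.IsOpenPosMeasure] {g ρ : X → ℝ} {Ω : Set X} (hΩ : IsOpen Ω)
    (hg : ContinuousOn g Ω) (hg0 : ∀ x, 0 ≤ g x) (hρ0 : ∀ x, 0 ≤ ρ x)
    (hρpos : ∀ x ∈ Ω, 0 < ρ x) (hint : Integrable (fun x => g x * ρ x) μ)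
    (h : ∫ x, g x * ρ x ∂μ = 0) : EqOn g 0 Ω := by
  have hae : (fun x => g x * ρ x) =ᵐ[μ] 0 :=
    (integral_eq_zero_iff_of_nonneg (fun x => mul_nonneg (hg0 x) (hρ0 x)) hint).mp h
  have hsupp : Ω ∩ g ⁻¹' {0}ᶜ ⊆ {x | g x * ρ x ≠ 0} :=
    fun x hx => mul_ne_zero hx.2 (hρpos x hx.1).ne'
  have hempty : Ω ∩ g ⁻¹' {0}ᶜ = ∅ :=
    (hg.isOpen_inter_preimage hΩ isOpen_compl_singleton).eq_empty_of_measure_zero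
      (measure_mono_null hsupp (ae_iff.mp hae))
  intro x hx
  by_contra hne
  exact hempty.subset ⟨hx, hne⟩

theorem dotProduct_sq_mul_eq_sum {ι : Type*} [Fintype ι] (u v : ι → ℝ) (r : ℝ) :
    (u ⬝ᵥ v) ^ 2 * r = ∑ i, ∑ j, u i * u j * (v i * v j * r) := by
  rw [dotProduct, sq, Finset.sum_mul_sum, Finset.sum_mul]
  refine Finset.sum_congr rfl fun i _ => ?_
  rw [Finset.sum_mul]
  exact Finset.sum_congr rfl fun j _ => by ring

section GradientOuterProduct

variable {X ι : Type*} [MeasurableSpace X] {μ : Measure X} [Fintype ι] {G : X → ι → ℝ}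
  {ρ : X → ℝ}

theorem integrable_dotProduct_sq_mul (hInt : ∀ i j, Integrable (fun x => G x i * G x j * ρ x) μ)
    (u : ι → ℝ) : Integrable (fun x => (u ⬝ᵥ G x) ^ 2 * ρ x) μ := by
  simp_rw [dotProduct_sq_mul_eq_sum]
  exact integrable_finsetSum _ fun i _ =>
    integrable_finsetSum _ fun j _ => (hInt i j).const_mul _

theorem integral_dotProduct_sq_mul (hInt : ∀ i j, Integrable (fun x => G x i * G x j * ρ x) μ)
    {C : Matrix ι ι ℝ} (hC : ∀ i j, C i j = ∫ x, G x i * G x j * ρ x ∂μ) (u : ι → ℝ) :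
    ∫ x, (u ⬝ᵥ G x) ^ 2 * ρ x ∂μ = u ⬝ᵥ C *ᵥ u := by
  simp_rw [dotProduct_sq_mul_eq_sum]
  rw [integral_finsetSum _ fun i _ =>
    integrable_finsetSum _ fun j _ => (hInt i j).const_mul _]
  simp_rw [integral_finsetSum _ fun j _ => (hInt _ j).const_mul _, integral_const_mul, ← hC]
  simp only [dotProduct, mulVec, Finset.mul_sum]
  exact Finset.sum_congr rfl fun i _ => Finset.sum_congr rfl fun j _ => by ring

end GradientOuterProduct

theorem HasGradientAt.fderiv_apply_eq_dotProduct {ι : Type*} [Fintype ι]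
    {f : EuclideanSpace ℝ ι → ℝ} {g x : EuclideanSpace ℝ ι} (h : HasGradientAt f g x)
    (u : EuclideanSpace ℝ ι) : fderiv ℝ f x u = u ⬝ᵥ g := by
  rw [h.hasFDerivAt.fderiv, InnerProductSpace.toDual_apply_apply,
    EuclideanSpace.inner_eq_star_dotProduct, star_trivial]

theorem apply_add_smul_eq_of_fderiv_apply_eq_zero {E F : Type*} [NormedAddCommGroup E]
    [NormedSpace ℝ E] [NormedAddCommGroup F] [NormedSpace ℝ F] {f : E → F} {x u : E} {t : ℝ}
    (hf : ∀ s ∈ uIcc 0 t, DifferentiableAt ℝ f (x + s • u))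
    (h0 : ∀ s ∈ uIcc 0 t, fderiv ℝ f (x + s • u) u = 0) : f (x + t • u) = f x := by
  have hderiv : ∀ s ∈ uIcc 0 t,
      HasDerivWithinAt (fun s : ℝ => f (x + s • u)) 0 (uIcc 0 t) s := by
    intro s hs
    have hline : HasDerivAt (fun s : ℝ => x + s • u) u s := by
      simpa using ((hasDerivAt_id s).smul_const u).const_add x
    have hcomp := (hf s hs).hasFDerivAt.comp_hasDerivAt s hline
    rw [h0 s hs] at hcomp
    exact hcomp.hasDerivWithinAt
  have hlip := convex_uIcc (0 : ℝ) t |>.norm_image_sub_le_of_norm_hasDerivWithin_le hderiv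
    (fun _ _ => norm_zero.le) left_mem_uIcc right_mem_uIcc
  simpa [sub_eq_zero] using hlip

theorem stmt7_general (m : ℕ)
    (Ω : Set (EuclideanSpace ℝ (Fin m))) (hΩo : IsOpen Ω)
    (f : EuclideanSpace ℝ (Fin m) → ℝ)
    (hf : ContDiff ℝ 1 f)
    (G : EuclideanSpace ℝ (Fin m) → EuclideanSpace ℝ (Fin m))
    (hG : ∀ x, HasGradientAt f (G x) x)
    (ρ : EuclideanSpace ℝ (Fin m) → ℝ)
    (hρpos : ∀ x ∈ Ω, 0 < ρ x) (hρz : ∀ x ∉ Ω, ρ x = 0)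
    (hInt : ∀ i j, Integrable (fun x => G x i * G x j * ρ x))
    (C : Matrix (Fin m) (Fin m) ℝ)
    (hC : ∀ i j, C i j = ∫ x, G x i * G x j * ρ x)
    (u : EuclideanSpace ℝ (Fin m)) (hu : C *ᵥ u = 0) :
    (∀ x ∈ Ω, (∑ i, u i * G x i) = 0) ∧
    (∀ (x : EuclideanSpace ℝ (Fin m)) (t : ℝ),
      (∀ s ∈ Set.uIcc (0 : ℝ) t, x + s • u ∈ Ω) → f (x + t • u) = f x) := by
  have hdir := fun y => (hG y).fderiv_apply_eq_dotProduct u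
  have hcont : Continuous fun y => fderiv ℝ f y u :=
    (hf.continuous_fderiv one_ne_zero).clm_apply continuous_const
  have hρ0 : ∀ x, 0 ≤ ρ x := fun x => by
    by_cases hx : x ∈ Ω
    · exact (hρpos x hx).le
    · exact (hρz x hx).ge
  have hsq : EqOn (fun y => (fderiv ℝ f y u) ^ 2) 0 Ω := by
    refine eqOn_zero_of_integral_mul_eq_zero (μ := volume) hΩo (hcont.pow 2).continuousOn
      (fun _ => sq_nonneg _) hρ0 hρpos ?_ ?_ <;> simp_rw [hdir]
    · exact integrable_dotProduct_sq_mul hInt u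
    · rw [integral_dotProduct_sq_mul hInt hC u, hu, dotProduct_zero]
  have hzero : ∀ x ∈ Ω, fderiv ℝ f x u = 0 := fun x hx =>
    pow_eq_zero_iff two_ne_zero |>.mp (hsq hx)
  refine ⟨fun x hx => (hdir x).symm.trans (hzero x hx), fun x t hseg => ?_⟩
  exact apply_add_smul_eq_of_fderiv_apply_eq_zero (fun s _ => hf.differentiable one_ne_zero _)
    fun s hs => hzero _ (hseg s hs)

/-- If ρ is a probability density positive on an open connected set Ω
and zero elsewhere, f is C¹, and C u = 0 for C = ∫ ∇f ∇fᵀ ρ dx, then the directional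
derivative uᵀ∇f vanishes on Ω; consequently f is constant along u within Ω. -/
theorem stmt7 (m : ℕ)
    (Ω : Set (EuclideanSpace ℝ (Fin m))) (hΩo : IsOpen Ω) (hΩc : IsConnected Ω)
    (f : EuclideanSpace ℝ (Fin m) → ℝ)
    (hf : ContDiff ℝ 1 f)
    (G : EuclideanSpace ℝ (Fin m) → EuclideanSpace ℝ (Fin m))
    (hG : ∀ x, HasGradientAt f (G x) x)
    (ρ : EuclideanSpace ℝ (Fin m) → ℝ) (hρm : Measurable ρ)
    (hρpos : ∀ x ∈ Ω, 0 < ρ x) (hρz : ∀ x ∉ Ω, ρ x = 0)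
    (M : ℝ) (hρb : ∀ x, ρ x ≤ M)
    (hρ1 : ∫ x, ρ x = 1)
    (hInt : ∀ i j, Integrable (fun x => G x i * G x j * ρ x))
    (C : Matrix (Fin m) (Fin m) ℝ)
    (hC : ∀ i j, C i j = ∫ x, G x i * G x j * ρ x)
    (u : EuclideanSpace ℝ (Fin m)) (hu : C *ᵥ u = 0) :
    (∀ x ∈ Ω, (∑ i, u i * G x i) = 0) ∧
    (∀ (x : EuclideanSpace ℝ (Fin m)) (t : ℝ),
      (∀ s ∈ Set.uIcc (0 : ℝ) t, x + s • u ∈ Ω) → f (x + t • u) = f x) :=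
  stmt7_general m Ω hΩo f hf G hG ρ hρpos hρz hInt C hC u hu
end

section
/- Let g : ℝⁿ → ℝ be C¹, σ a probability density on ℝⁿ, U the orthogonal eigenvector matrix of C = ∫ ∇g(γ)∇g(γ)ᵀ σ(γ) dγ with eigenvalues λ₁ ≥ … ≥ λₙ. Define h(δ) = g(Uδ) and the induced density σ'(δ) = σ(Uδ). Then the derivative-based sensitivity metric ν_i = ∫ (∂h/∂δ_i)² σ'(δ) dδ equals λ_i for each i. -/
/-!
The rotation `δ ↦ Uδ` is a linear isometry, hence measure preserving, and the gradient of
`h = g ∘ U` is `Uᵀ ∇g(Uδ)`, whose `i`-th coordinate is `uᵢ ⬝ ∇g(Uδ)` for the `i`-th column `uᵢ`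
of `U`. Changing variables back, `νᵢ = ∫ (uᵢ ⬝ ∇g)² σ = uᵢᵀ C uᵢ`, which is `λᵢ` because `uᵢ` is
a unit eigenvector of `C`.
-/

open Matrix MeasureTheory

theorem HasGradientAt.comp_linearIsometryEquiv {𝕜 E F : Type*} [RCLike 𝕜]
    [NormedAddCommGroup E] [InnerProductSpace 𝕜 E] [CompleteSpace E]
    [NormedAddCommGroup F] [InnerProductSpace 𝕜 F] [CompleteSpace F]
    {f : F → 𝕜} {f' : F} (e : E ≃ₗᵢ[𝕜] F) {x : E} (hf : HasGradientAt f f' (e x)) :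
    HasGradientAt (f ∘ e) (e.symm f') x := by
  rw [hasGradientAt_iff_hasFDerivAt] at hf ⊢
  refine (hf.comp x e.toContinuousLinearEquiv.hasFDerivAt).congr_fderiv ?_
  ext v
  simp [LinearIsometryEquiv.inner_map_eq_flip]

namespace Matrix.UnitaryGroup
variable {𝕜 n : Type*} [RCLike 𝕜] [Fintype n] [DecidableEq n]

noncomputable def toLinearIsometryEquiv (A : unitaryGroup n 𝕜) :
    EuclideanSpace 𝕜 n ≃ₗᵢ[𝕜] EuclideanSpace 𝕜 n :=
  Unitary.linearIsometryEquiv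
    ⟨toEuclideanCLM (n := n) (𝕜 := 𝕜) A, Unitary.map_mem toEuclideanCLM A.2⟩

@[simp] lemma toLinearIsometryEquiv_apply (A : unitaryGroup n 𝕜) (x : EuclideanSpace 𝕜 n) :
    toLinearIsometryEquiv A x = WithLp.toLp 2 (A.1 *ᵥ x.ofLp) := rfl

@[simp] lemma toLinearIsometryEquiv_symm_apply (A : unitaryGroup n 𝕜) (x : EuclideanSpace 𝕜 n) :
    (toLinearIsometryEquiv A).symm x = WithLp.toLp 2 (star A.1 *ᵥ x.ofLp) := by
  rw [LinearIsometryEquiv.symm_apply_eq, toLinearIsometryEquiv_apply, WithLp.ofLp_toLp,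
    mulVec_mulVec, Unitary.mul_star_self_of_mem A.2, one_mulVec, WithLp.toLp_ofLp]

end Matrix.UnitaryGroup

theorem integral_sq_dotProduct_mul {α ι : Type*} [MeasurableSpace α] {μ : Measure α} [Fintype ι]
    (G : α → ι → ℝ) (w : α → ℝ) (v : ι → ℝ)
    (hG : ∀ i j, Integrable (fun x => G x i * G x j * w x) μ) :
    ∫ x, (v ⬝ᵥ G x) ^ 2 * w x ∂μ = v ⬝ᵥ (of fun i j => ∫ x, G x i * G x j * w x ∂μ) *ᵥ v := by
  have hexpand : ∀ x, (v ⬝ᵥ G x) ^ 2 * w x = ∑ i, ∑ j, v i * v j * (G x i * G x j * w x) := by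
    intro x
    rw [dotProduct, sq, Finset.sum_mul_sum, Finset.sum_mul]
    refine Finset.sum_congr rfl fun i _ => ?_
    rw [Finset.sum_mul]
    exact Finset.sum_congr rfl fun j _ => by ring
  simp_rw [hexpand]
  rw [integral_finsetSum _ fun i _ => integrable_finsetSum _ fun j _ => (hG i j).const_mul _]
  refine Finset.sum_congr rfl fun i _ => ?_
  rw [integral_finsetSum _ fun j _ => (hG i j).const_mul _, mulVec, dotProduct, Finset.mul_sum]
  refine Finset.sum_congr rfl fun j _ => ?_
  rw [integral_const_mul, of_apply]
  ring

theorem stmt13_general (n : ℕ)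
    (g : EuclideanSpace ℝ (Fin n) → ℝ)
    (Gg : EuclideanSpace ℝ (Fin n) → EuclideanSpace ℝ (Fin n))
    (hGg : ∀ γ, HasGradientAt g (Gg γ) γ)
    (σ : EuclideanSpace ℝ (Fin n) → ℝ)
    (C : Matrix (Fin n) (Fin n) ℝ)
    (hC : ∀ i j, C i j = ∫ γ, Gg γ i * Gg γ j * σ γ)
    (hIntC : ∀ i j, Integrable (fun γ => Gg γ i * Gg γ j * σ γ))
    (U : Matrix (Fin n) (Fin n) ℝ) (hU : Uᵀ * U = 1)
    (lam : Fin n → ℝ)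
    (heig : ∀ i : Fin n, C *ᵥ (fun j => U j i) = lam i • (fun j => U j i))
    (h : EuclideanSpace ℝ (Fin n) → ℝ)
    (hh : ∀ δ : EuclideanSpace ℝ (Fin n), h δ = g (WithLp.toLp 2 (U *ᵥ δ : Fin n → ℝ)))
    (Gh : EuclideanSpace ℝ (Fin n) → EuclideanSpace ℝ (Fin n))
    (hGh : ∀ δ, HasGradientAt h (Gh δ) δ) :
    ∀ i : Fin n,
      (∫ δ : EuclideanSpace ℝ (Fin n), (Gh δ i) ^ 2 * σ (WithLp.toLp 2 (U *ᵥ δ : Fin n → ℝ)))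
        = lam i := by
  intro i
  set u : Fin n → ℝ := fun j => U j i
  let e := UnitaryGroup.toLinearIsometryEquiv ⟨U, (mem_orthogonalGroup_iff' _ _).mpr hU⟩
  have h_eq : h = g ∘ e := funext hh
  have hGh_eq : ∀ δ, Gh δ i = u ⬝ᵥ Gg (e δ) := fun δ => by
    rw [(hGh δ).unique (h_eq ▸ (hGg (e δ)).comp_linearIsometryEquiv e)]
    simp [e, u, mulVec, dotProduct]
  have hu_unit : u ⬝ᵥ u = 1 := by rw [← one_apply_eq (α := ℝ) i, ← hU, mul_apply']; rfl
  calc (∫ δ, (Gh δ i) ^ 2 * σ (WithLp.toLp 2 (U *ᵥ δ : Fin n → ℝ)))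
      = ∫ δ, (u ⬝ᵥ Gg (e δ)) ^ 2 * σ (e δ) := by simp_rw [hGh_eq]; rfl
    _ = ∫ γ, (u ⬝ᵥ Gg γ) ^ 2 * σ γ := integral_comp e fun γ => (u ⬝ᵥ Gg γ) ^ 2 * σ γ
    _ = u ⬝ᵥ C *ᵥ u := by
      rw [integral_sq_dotProduct_mul (fun γ => (Gg γ).ofLp) σ u hIntC]
      congr
      ext j k
      exact (hC j k).symm
    _ = lam i := by rw [heig i, dotProduct_smul, hu_unit, smul_eq_mul, mul_one]

/-- Rotating coordinates by the orthogonal eigenvector matrix U of the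
active subspace matrix C = ∫ ∇g ∇gᵀ σ dγ, the derivative-based sensitivity metric of
the i-th rotated coordinate, ν_i = ∫ (∂h/∂δ_i)² σ(Uδ) dδ for h(δ) = g(Uδ), equals the
i-th eigenvalue λ_i. -/
theorem stmt13 (n : ℕ)
    (g : EuclideanSpace ℝ (Fin n) → ℝ) (hg : ContDiff ℝ 1 g)
    (Gg : EuclideanSpace ℝ (Fin n) → EuclideanSpace ℝ (Fin n))
    (hGg : ∀ γ, HasGradientAt g (Gg γ) γ)
    (σ : EuclideanSpace ℝ (Fin n) → ℝ)
    (hσ0 : ∀ γ, 0 ≤ σ γ) (hσ1 : ∫ γ, σ γ = 1)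
    (C : Matrix (Fin n) (Fin n) ℝ)
    (hC : ∀ i j, C i j = ∫ γ, Gg γ i * Gg γ j * σ γ)
    (hIntC : ∀ i j, Integrable (fun γ => Gg γ i * Gg γ j * σ γ))
    (U : Matrix (Fin n) (Fin n) ℝ) (hU : Uᵀ * U = 1)
    (lam : Fin n → ℝ) (hlam : Antitone lam)
    (heig : ∀ i : Fin n, C *ᵥ (fun j => U j i) = lam i • (fun j => U j i))
    (h : EuclideanSpace ℝ (Fin n) → ℝ)
    (hh : ∀ δ : EuclideanSpace ℝ (Fin n), h δ = g (WithLp.toLp 2 (U *ᵥ δ : Fin n → ℝ)))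
    (Gh : EuclideanSpace ℝ (Fin n) → EuclideanSpace ℝ (Fin n))
    (hGh : ∀ δ, HasGradientAt h (Gh δ) δ)
    (hIntν : ∀ i, Integrable (fun δ : EuclideanSpace ℝ (Fin n) =>
      (Gh δ i) ^ 2 * σ (WithLp.toLp 2 (U *ᵥ δ : Fin n → ℝ)))) :
    ∀ i : Fin n,
      (∫ δ : EuclideanSpace ℝ (Fin n), (Gh δ i) ^ 2 * σ (WithLp.toLp 2 (U *ᵥ δ : Fin n → ℝ)))
        = lam i :=
  stmt13_general n g Gg hGg σ C hC hIntC U hU lam heig h hh Gh hGh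
end

section
/- Let D ∈ ℝ^{k×m} have rank k, let w ∈ ℝᵐ satisfy D w = v(q) (the dimension vector of the dependent quantity q), and let w₁,…,wₙ span null(D). If the physical relation is π = f(π₁,…,πₙ) with π = q·exp(−wᵀ log q̄) and π_i = exp(w_iᵀ log q̄), then q, as a function of x = log(q̄), is a ridge function: q = h(Aᵀx) where A = [w, w₁, …, wₙ] ∈ ℝ^{m×(n+1)} and h(y₀, y₁, …, yₙ) = exp(y₀)·f(exp(y₁),…,exp(yₙ)). -/
open Matrix

/-- Given the Buckingham Pi relation π = f(π₁,…,πₙ) with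
π = q·exp(−wᵀ log q̄) and π_i = exp(w_iᵀ log q̄), the dependent quantity q, as a
function of x = log q̄, is a ridge function q = h(Aᵀx) with A = [w, w₁, …, wₙ] and
h(y₀,…,yₙ) = exp(y₀)·f(exp(y₁),…,exp(yₙ)). -/
theorem stmt18 (k m n : ℕ)
    (D : Matrix (Fin k) (Fin m) ℝ) (hD : D.rank = k)
    (v : Fin k → ℝ) (w : Fin m → ℝ) (hw : D *ᵥ w = v)
    (W : Matrix (Fin m) (Fin n) ℝ)
    (hWnull : ∀ j : Fin n, D *ᵥ (fun i => W i j) = 0)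
    (hWspan : Submodule.span ℝ (Set.range fun j : Fin n => (fun i => W i j : Fin m → ℝ))
      = LinearMap.ker D.mulVecLin)
    (f : (Fin n → ℝ) → ℝ)
    (qdep : (Fin m → ℝ) → ℝ)
    (hrel : ∀ qbar : Fin m → ℝ, (∀ i, 0 < qbar i) →
      qdep qbar * Real.exp (-(∑ i, w i * Real.log (qbar i)))
        = f (fun j => Real.exp (∑ i, W i j * Real.log (qbar i))))
    (A : Matrix (Fin m) (Fin (n + 1)) ℝ)
    (hA : ∀ i, A i 0 = w i ∧ ∀ j : Fin n, A i j.succ = W i j)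
    (h : (Fin (n + 1) → ℝ) → ℝ)
    (hh : ∀ y : Fin (n + 1) → ℝ,
      h y = Real.exp (y 0) * f (fun j => Real.exp (y j.succ))) :
    ∀ qbar : Fin m → ℝ, (∀ i, 0 < qbar i) →
      qdep qbar = h (Aᵀ *ᵥ fun i => Real.log (qbar i)) := by
  intro qbar hq
  rw [hh]
  have h0 : (Aᵀ *ᵥ fun i => Real.log (qbar i)) 0 = ∑ i, w i * Real.log (qbar i) := by
    simp [Matrix.mulVec, dotProduct, Matrix.transpose]
    exact Finset.sum_congr rfl fun i _ => by rw [(hA i).1]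
  have hs : ∀ j : Fin n, (Aᵀ *ᵥ fun i => Real.log (qbar i)) j.succ
      = ∑ i, W i j * Real.log (qbar i) := by
    intro j
    simp [Matrix.mulVec, dotProduct, Matrix.transpose]
    exact Finset.sum_congr rfl fun i _ => by rw [(hA i).2 j]
  rw [h0]
  have : (fun j : Fin n => Real.exp ((Aᵀ *ᵥ fun i => Real.log (qbar i)) j.succ))
      = fun j => Real.exp (∑ i, W i j * Real.log (qbar i)) := by
    funext j; rw [hs j]
  rw [this, ← hrel qbar hq]
  rw [mul_comm, mul_assoc, ← Real.exp_add]
  simp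
end
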